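/- arXiv:1205.0512 — 4 statements merged into one kernel-verified Lean document; each statement's English description precedes it below -/
import Mathlib

section
/- Let ω be a Borel probability measure on ℝ, α ∈ (0,2], and suppose ∫_ℝ |λ|^α dω(λ) < ∞. With v(t) := ∫_ℝ e^{−iλt} dω(λ) and P(t) := |v(t)|², one has for all t > 0: 1 − P(t) ≤ 4 t^α ∫_ℝ |λ|^α dω(λ). -/
/-!
Writing `v(t) = ∫ e^{iθ}` with `θ = -λt`, the inequality `|1 - v|² ≥ 0` gives
`1 - |v|² ≤ 2 (1 - Re v) = 2 ∫ (1 - cos θ) = 4 ∫ sin² (θ / 2)`, and for `0 ≤ α ≤ 2` one has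
`sin² y ≤ |y|^α` (use `sin² y ≤ 1` when `|y| ≥ 1` and `sin² y ≤ y²` otherwise).
Hence `1 - P(t) ≤ 4 (t/2)^α ∫ |λ|^α dω ≤ 4 t^α ∫ |λ|^α dω`.
-/

open MeasureTheory

theorem Real.sin_sq_le_abs_rpow {α : ℝ} (hα0 : 0 ≤ α) (hα2 : α ≤ 2) (y : ℝ) :
    Real.sin y ^ 2 ≤ |y| ^ α := by
  rcases le_total 1 |y| with h1 | h1
  · exact (Real.sin_sq_le_one y).trans (Real.one_le_rpow h1 hα0)
  · calc Real.sin y ^ 2 ≤ |y| ^ (2 : ℝ) := by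
          rw [Real.rpow_two, sq_abs]; exact Real.sin_sq_le_sq
      _ ≤ |y| ^ α := Real.rpow_le_rpow_of_exponent_ge' (abs_nonneg y) h1 hα0 hα2

theorem Real.one_sub_cos_le_two_mul_abs_half_rpow {α : ℝ} (hα0 : 0 ≤ α) (hα2 : α ≤ 2) (x : ℝ) :
    1 - Real.cos x ≤ 2 * |x / 2| ^ α := by
  have hcos : Real.cos x = Real.cos (x / 2) ^ 2 - Real.sin (x / 2) ^ 2 := by
    rw [← Real.cos_two_mul', mul_div_cancel₀ x two_ne_zero]
  linarith [Real.sin_sq_add_cos_sq (x / 2), Real.sin_sq_le_abs_rpow hα0 hα2 (x / 2)]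

theorem Complex.one_sub_sq_norm_le_two_mul_one_sub_re (z : ℂ) :
    1 - ‖z‖ ^ 2 ≤ 2 * (1 - z.re) := by
  rw [Complex.sq_norm, Complex.normSq_apply]
  nlinarith [sq_nonneg (1 - z.re), sq_nonneg z.im]

section PhaseIntegral

open Complex

variable {Ω : Type*} [MeasurableSpace Ω] {μ : Measure Ω} {θ : Ω → ℝ}

theorem integrable_exp_ofReal_mul_I [IsFiniteMeasure μ] (hθ : AEMeasurable θ μ) :
    Integrable (fun x => exp (θ x * I)) μ :=
  Integrable.of_bound
    (Complex.measurable_exp.comp_aemeasurable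
      ((Complex.measurable_ofReal.comp_aemeasurable hθ).mul_const I)).aestronglyMeasurable
    1 (Filter.Eventually.of_forall fun x => (norm_exp_ofReal_mul_I (θ x)).le)

theorem re_integral_exp_ofReal_mul_I [IsFiniteMeasure μ] (hθ : AEMeasurable θ μ) :
    (∫ x, exp (θ x * I) ∂μ).re = ∫ x, Real.cos (θ x) ∂μ := by
  have h := integral_re (integrable_exp_ofReal_mul_I hθ)
  simp only [RCLike.re_to_complex, exp_ofReal_mul_I_re] at h
  exact h.symm

theorem one_sub_sq_norm_integral_exp_ofReal_mul_I_le [IsProbabilityMeasure μ]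
    (hθ : AEMeasurable θ μ) {α : ℝ} (hα0 : 0 ≤ α) (hα2 : α ≤ 2)
    (hmom : Integrable (fun x => |θ x / 2| ^ α) μ) :
    1 - ‖∫ x, exp (θ x * I) ∂μ‖ ^ 2 ≤ 4 * ∫ x, |θ x / 2| ^ α ∂μ := by
  have hcos : Integrable (fun x => Real.cos (θ x)) μ := by
    simpa only [RCLike.re_to_complex, exp_ofReal_mul_I_re] using
      (integrable_exp_ofReal_mul_I hθ).re
  have hre : 1 - (∫ x, exp (θ x * I) ∂μ).re ≤ 2 * ∫ x, |θ x / 2| ^ α ∂μ := by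
    have hsub : ∫ x, (1 - Real.cos (θ x)) ∂μ = 1 - ∫ x, Real.cos (θ x) ∂μ := by
      simp [integral_sub (integrable_const 1) hcos]
    rw [re_integral_exp_ofReal_mul_I hθ, ← hsub, ← integral_const_mul]
    exact integral_mono ((integrable_const 1).sub hcos) (hmom.const_mul 2)
      fun x => Real.one_sub_cos_le_two_mul_abs_half_rpow hα0 hα2 (θ x)
  linarith [one_sub_sq_norm_le_two_mul_one_sub_re (∫ x, exp (θ x * I) ∂μ)]

end PhaseIntegral

/-- Upper bound on the decay: 1 − P(t) ≤ 4 t^α ⟨|λ|^α⟩. -/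
theorem decay_law_upper_bound (ω : Measure ℝ) [IsProbabilityMeasure ω]
    (α : ℝ) (hα0 : 0 < α) (hα2 : α ≤ 2)
    (hmom : Integrable (fun lam : ℝ => |lam| ^ α) ω)
    (v : ℝ → ℂ) (hv : ∀ t : ℝ, v t = ∫ lam : ℝ, Complex.exp (-Complex.I * lam * t) ∂ω)
    (P : ℝ → ℝ) (hP : ∀ t : ℝ, P t = ‖v t‖ ^ 2) :
    ∀ t : ℝ, 0 < t →
      1 - P t ≤ 4 * t ^ α * ∫ lam : ℝ, |lam| ^ α ∂ω := by
  intro t ht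
  have hscale (lam : ℝ) : |-(lam * t) / 2| ^ α = (t / 2) ^ α * |lam| ^ α := by
    rw [neg_div, abs_neg, mul_div_assoc, abs_mul, abs_of_pos (half_pos ht),
      Real.mul_rpow (abs_nonneg lam) (half_pos ht).le, mul_comm]
  have hphase : v t = ∫ lam : ℝ, Complex.exp (↑(-(lam * t)) * Complex.I) ∂ω := by
    rw [hv t]; congr 1; funext lam; push_cast; ring_nf
  have hbound := one_sub_sq_norm_integral_exp_ofReal_mul_I_le (μ := ω)
    (θ := fun lam => -(lam * t)) (by fun_prop) hα0.le hα2
    (by simpa only [hscale] using hmom.const_mul ((t / 2) ^ α))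
  simp only [hscale, integral_const_mul, ← hphase, ← hP] at hbound
  have hhalf : (t / 2) ^ α ≤ t ^ α := Real.rpow_le_rpow (half_pos ht).le (half_le_self ht.le) hα0.le
  have hM : 0 ≤ ∫ lam : ℝ, |lam| ^ α ∂ω := integral_nonneg fun lam => by positivity
  nlinarith
end

section
/- Let ω be a Borel probability measure on ℝ and P(t) := |∫_ℝ e^{−iλt} dω(λ)|². Then for every t > 0, 1 − P(t) ≥ (2t²/π²) ∫∫_{[−π/(2t), π/(2t)]²} (λ−μ)² dω(λ) dω(μ). -/
open MeasureTheory ComplexConjugate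

/-! Expanding the squared modulus as a double integral gives
`1 - P t = ∫∫ (1 - cos ((λ - μ) t)) dω dω`, whose integrand is nonnegative. On the square
`[-π/(2t), π/(2t)]²` one has `|(λ - μ) t| ≤ π`, where Jordan's inequality gives
`1 - cos x ≥ 2 x² / π²`. -/

lemma norm_integral_sq_eq_integral_re_mul_conj {α : Type*} [MeasurableSpace α] {μ : Measure α}
    [SFinite μ] {f : α → ℂ} (hf : Integrable f μ) :
    ‖∫ x, f x ∂μ‖ ^ 2 = ∫ p, (f p.1 * conj (f p.2)).re ∂μ.prod μ := by
  have hprod : Integrable (fun p : α × α => f p.1 * conj (f p.2)) (μ.prod μ) :=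
    hf.mul_prod (Complex.conjCLE.toContinuousLinearMap.integrable_comp hf)
  calc ‖∫ x, f x ∂μ‖ ^ 2 = ((∫ x, f x ∂μ) * conj (∫ x, f x ∂μ)).re := by
        rw [Complex.mul_conj']; norm_cast
    _ = _ := by rw [← integral_conj, ← integral_prod_mul]; exact (integral_re hprod).symm

lemma re_exp_mul_conj_exp (t x y : ℝ) :
    (Complex.exp (-Complex.I * x * t) * conj (Complex.exp (-Complex.I * y * t))).re =
      Real.cos ((x - y) * t) := by
  rw [← Complex.exp_conj, ← Complex.exp_add, ← Real.cos_neg, ← Complex.exp_ofReal_mul_I_re]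
  congr 2
  simp only [map_mul, map_neg, Complex.conj_I, Complex.conj_ofReal]
  push_cast
  ring

lemma integrable_exp_neg_I_mul (μ : Measure ℝ) [IsFiniteMeasure μ] (t : ℝ) :
    Integrable (fun x : ℝ => Complex.exp (-Complex.I * x * t)) μ := by
  refine Integrable.of_bound (by fun_prop) 1 (ae_of_all _ fun x => le_of_eq ?_)
  rw [show -Complex.I * x * t = ((-(x * t) : ℝ) : ℂ) * Complex.I by push_cast; ring]
  exact Complex.norm_exp_ofReal_mul_I _

lemma integrable_cos_sub_mul (μ : Measure (ℝ × ℝ)) [IsFiniteMeasure μ] (t : ℝ) :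
    Integrable (fun p : ℝ × ℝ => Real.cos ((p.1 - p.2) * t)) μ :=
  Integrable.of_bound (by fun_prop) 1 (ae_of_all _ fun p => by
    simpa only [Real.norm_eq_abs] using Real.abs_cos_le_one _)

lemma one_sub_norm_integral_exp_sq (μ : Measure ℝ) [IsProbabilityMeasure μ] (t : ℝ) :
    1 - ‖∫ x, Complex.exp (-Complex.I * x * t) ∂μ‖ ^ 2 =
      ∫ p : ℝ × ℝ, (1 - Real.cos ((p.1 - p.2) * t)) ∂μ.prod μ := by
  rw [norm_integral_sq_eq_integral_re_mul_conj (integrable_exp_neg_I_mul μ t),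
    integral_sub (integrable_const 1) (integrable_cos_sub_mul _ t), integral_const, probReal_univ,
    one_smul]
  simp only [re_exp_mul_conj_exp]

lemma abs_sub_mul_le_pi_of_mem_Icc {t a b : ℝ} (ht : 0 < t)
    (ha : a ∈ Set.Icc (-(Real.pi / (2 * t))) (Real.pi / (2 * t)))
    (hb : b ∈ Set.Icc (-(Real.pi / (2 * t))) (Real.pi / (2 * t))) :
    |(a - b) * t| ≤ Real.pi := by
  have hc : Real.pi / (2 * t) * t = Real.pi / 2 := by field_simp
  rw [abs_le]
  constructor <;> nlinarith [ha.1, ha.2, hb.1, hb.2]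

/-- Lower bound on the decay probability via the truncated variance. -/
theorem decay_law_lower_bound (ω : Measure ℝ) [IsProbabilityMeasure ω]
    (P : ℝ → ℝ)
    (hP : ∀ t : ℝ, P t = ‖∫ lam : ℝ, Complex.exp (-Complex.I * lam * t) ∂ω‖ ^ 2) :
    ∀ t : ℝ, 0 < t →
      1 - P t ≥ (2 * t ^ 2 / Real.pi ^ 2) *
        ∫ p in (Set.Icc (-(Real.pi / (2 * t))) (Real.pi / (2 * t)) ×ˢ
                Set.Icc (-(Real.pi / (2 * t))) (Real.pi / (2 * t))),
          (p.1 - p.2) ^ 2 ∂(ω.prod ω) := by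
  intro t ht
  set I := Set.Icc (-(Real.pi / (2 * t))) (Real.pi / (2 * t))
  have hint : Integrable (fun p : ℝ × ℝ => 1 - Real.cos ((p.1 - p.2) * t)) (ω.prod ω) :=
    (integrable_const 1).sub (integrable_cos_sub_mul _ t)
  rw [hP, one_sub_norm_integral_exp_sq, ge_iff_le, ← integral_const_mul]
  calc ∫ p in I ×ˢ I, 2 * t ^ 2 / Real.pi ^ 2 * (p.1 - p.2) ^ 2 ∂ω.prod ω
      = ∫ p in I ×ˢ I, 2 / Real.pi ^ 2 * ((p.1 - p.2) * t) ^ 2 ∂ω.prod ω := by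
        congr 1 with p; ring
    _ ≤ ∫ p in I ×ˢ I, (1 - Real.cos ((p.1 - p.2) * t)) ∂ω.prod ω := by
        refine setIntegral_mono_on ?_ hint.integrableOn (measurableSet_Icc.prod measurableSet_Icc)
          fun p hp => ?_
        · exact ContinuousOn.integrableOn_compact (isCompact_Icc.prod isCompact_Icc) (by fun_prop)
        · linarith [Real.cos_le_one_sub_mul_cos_sq (abs_sub_mul_le_pi_of_mem_Icc ht hp.1 hp.2)]
    _ ≤ ∫ p, (1 - Real.cos ((p.1 - p.2) * t)) ∂ω.prod ω :=
        setIntegral_le_integral hint (ae_of_all _ fun p => sub_nonneg.2 (Real.cos_le_one _))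
end

section
/- Let a, b ∈ ℝ, c ∈ ℂ, and k, κ > 0 be real. Set D := (a − ik)(b − iκ) − |c|², A := ((a + ik)(b − iκ) − |c|²)/D and B := 2ik c̄ / D. If D ≠ 0, then |A|² + (κ/k)|B|² = 1. Equivalently, |D|² − |(a + ik)(b − iκ) − |c|²|² = 4kκ|c|². -/
open Complex

/-- With `z = b - iκ` the difference is `-4 Re((a z - s²) · conj (i k z))`, in which only the
cross term `4 k s² Re(-i conj z) = 4 k κ s²` of the real coupling `s²` survives. -/
lemma norm_sq_sub_norm_sq_two_channel (a b k κ s : ℝ) :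
    ‖((a : ℂ) - I * k) * ((b : ℂ) - I * κ) - (s : ℂ) ^ 2‖ ^ 2
      - ‖((a : ℂ) + I * k) * ((b : ℂ) - I * κ) - (s : ℂ) ^ 2‖ ^ 2
      = 4 * k * κ * s ^ 2 := by
  simp only [Complex.sq_norm, normSq_apply, sub_re, sub_im, add_re, add_im, mul_re, mul_im,
    I_re, I_im, ofReal_re, ofReal_im, ← ofReal_pow]
  ring

lemma norm_sq_two_mul_I_mul_conj (k : ℝ) (c : ℂ) :
    ‖2 * I * k * starRingEnd ℂ c‖ ^ 2 = 4 * k ^ 2 * ‖c‖ ^ 2 := by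
  simp only [norm_mul, Complex.norm_conj, norm_real, Real.norm_eq_abs, Complex.norm_two, norm_I]
  rw [mul_pow, mul_pow, mul_pow, sq_abs]
  ring

theorem two_channel_unitarity_general (a b : ℝ) (c : ℂ) (k κ : ℝ)
    (D A B : ℂ)
    (hD : D = ((a : ℂ) - Complex.I * k) * ((b : ℂ) - Complex.I * κ)
      - (‖c‖ : ℂ) ^ 2)
    (hA : A = (((a : ℂ) + Complex.I * k) * ((b : ℂ) - Complex.I * κ)
      - (‖c‖ : ℂ) ^ 2) / D)
    (hB : B = 2 * Complex.I * k * (starRingEnd ℂ c) / D)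
    (hDne : D ≠ 0) :
    ‖A‖ ^ 2 + (κ / k) * ‖B‖ ^ 2 = 1
    ∧ ‖D‖ ^ 2
        - ‖((a : ℂ) + Complex.I * k) * ((b : ℂ) - Complex.I * κ)
            - (‖c‖ : ℂ) ^ 2‖ ^ 2
      = 4 * k * κ * ‖c‖ ^ 2 := by
  have hflux := hD ▸ norm_sq_sub_norm_sq_two_channel a b k κ ‖c‖
  refine ⟨?_, hflux⟩
  have hD₀ : ‖D‖ ^ 2 ≠ 0 := by positivity
  -- `κ / k * k ^ 2 = κ * k` holds also at `k = 0`, both sides being `0`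
  have hκk : κ / k * k ^ 2 = κ * k := by
    rw [div_mul_eq_mul_div, mul_comm κ, div_sq_cancel, mul_comm]
  rw [hA, hB, norm_div, norm_div, div_pow, div_pow, norm_sq_two_mul_I_mul_conj, ← mul_div_assoc,
    ← add_div, div_eq_one_iff_eq hD₀]
  linear_combination 4 * ‖c‖ ^ 2 * hκk - hflux

/-- Two-channel unitarity above the threshold. -/
theorem two_channel_unitarity (a b : ℝ) (c : ℂ) (k κ : ℝ) (hk : 0 < k) (hκ : 0 < κ)
    (D A B : ℂ)
    (hD : D = ((a : ℂ) - Complex.I * k) * ((b : ℂ) - Complex.I * κ)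
      - (‖c‖ : ℂ) ^ 2)
    (hA : A = (((a : ℂ) + Complex.I * k) * ((b : ℂ) - Complex.I * κ)
      - (‖c‖ : ℂ) ^ 2) / D)
    (hB : B = 2 * Complex.I * k * (starRingEnd ℂ c) / D)
    (hDne : D ≠ 0) :
    ‖A‖ ^ 2 + (κ / k) * ‖B‖ ^ 2 = 1
    ∧ ‖D‖ ^ 2
        - ‖((a : ℂ) + Complex.I * k) * ((b : ℂ) - Complex.I * κ)
            - (‖c‖ : ℂ) ^ 2‖ ^ 2
      = 4 * k * κ * ‖c‖ ^ 2 :=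
  two_channel_unitarity_general a b c k κ D A B hD hA hB hDne
end

section
/- Let l > 0 and b ∈ ℝ with 0 < |b| < √2. Then the set of complex solutions k of tan(kl) = −i b²/2 is exactly { nπ/l + (i/(2l)) ln((2 − b²)/(2 + b²)) : n ∈ ℤ }. -/
/-!
Put `E = exp (2 i z)`. Clearing denominators, `tan z = c` becomes the linear equation
`E (1 - i c) = 1 + i c`, so its solutions are `arctan c + n π`. For `c = -i b² / 2 = i t` with
`|t| < 1` the quotient `(1 + i c) / (1 - i c) = (1 - t) / (1 + t)` is a positive real, so
`arctan c = (i / 2) ln ((1 + t) / (1 - t))` is purely imaginary; then divide `z = k l` by `l`.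
-/

open Complex Real

namespace Complex

-- `c ≠ 0` because `tan z` takes the junk value `0` where `cos z = 0`.
theorem tan_eq_iff_sin_eq_mul_cos {z c : ℂ} (hc : c ≠ 0) : tan z = c ↔ sin z = c * cos z := by
  rw [tan_eq_sin_div_cos]
  by_cases hcos : cos z = 0
  · have hsin : sin z ≠ 0 := by
      intro hsin
      simpa [hsin, hcos] using sin_sq_add_cos_sq z
    simp [hcos, hsin, hc.symm]
  · exact div_eq_iff hcos

theorem sin_eq_mul_cos_iff_exp_eq {z c : ℂ} (hc : c ≠ -I) :
    sin z = c * cos z ↔ exp (2 * z * I) = (1 + c * I) / (1 - c * I) := by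
  have hden : 1 - c * I ≠ 0 := by
    contrapose! hc
    linear_combination I * hc + c * I_sq
  set E := exp (z * I)
  have hE : E ≠ 0 := exp_ne_zero _
  have hsin : sin z * (2 * E) = (1 - E ^ 2) * I := by
    rw [sin, neg_mul, exp_neg]
    field_simp
    ring
  have hcos : cos z * (2 * E) = E ^ 2 + 1 := by
    rw [cos, neg_mul, exp_neg]
    field_simp
    ring
  have hsq : exp (2 * z * I) = E ^ 2 := by
    rw [← exp_nat_mul]
    ring_nf
  rw [hsq, eq_div_iff hden, ← mul_left_inj' (mul_ne_zero two_ne_zero hE), hsin,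
    mul_assoc, hcos]
  constructor <;> intro h
  · linear_combination I * h + (E ^ 2 - 1) * I_sq
  · linear_combination (-I) * h - c * (E ^ 2 + 1) * I_sq

theorem exp_two_mul_mul_I_eq_iff {z w : ℂ} (hw : w ≠ 0) :
    exp (2 * z * I) = w ↔ ∃ n : ℤ, z = -I / 2 * log w + n * π := by
  conv_lhs => rw [← exp_log hw, exp_eq_exp_iff_exists_int]
  refine exists_congr fun n => ⟨fun h => ?_, fun h => ?_⟩
  · linear_combination (-I / 2) * h + (z - n * π) * I_sq
  · linear_combination (2 * I) * h - log w * I_sq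

theorem tan_eq_iff_exists_int {z c : ℂ} (h₀ : c ≠ 0) (h₁ : c ≠ I) (h₂ : c ≠ -I) :
    tan z = c ↔ ∃ n : ℤ, z = arctan c + n * π := by
  have hnum : 1 + c * I ≠ 0 := by
    contrapose! h₁
    linear_combination (-I) * h₁ + c * I_sq
  have hden : 1 - c * I ≠ 0 := by
    contrapose! h₂
    linear_combination I * h₂ + c * I_sq
  rw [tan_eq_iff_sin_eq_mul_cos h₀, sin_eq_mul_cos_iff_exp_eq h₂,
    exp_two_mul_mul_I_eq_iff (div_ne_zero hnum hden), arctan]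

theorem arctan_I_mul_ofReal {t : ℝ} (ht : |t| < 1) :
    arctan (I * t) = I / 2 * Real.log ((1 + t) / (1 - t)) := by
  obtain ⟨h₁, h₂⟩ := abs_lt.mp ht
  have hq : (1 + I * t * I) / (1 - I * t * I) = ((1 - t) / (1 + t) : ℝ) := by
    push_cast
    rw [mul_assoc, mul_comm (t : ℂ), ← mul_assoc, I_mul_I]
    ring
  have hlog : Real.log ((1 - t) / (1 + t)) = -Real.log ((1 + t) / (1 - t)) := by
    rw [← Real.log_inv, inv_div]
  rw [arctan, hq, ← ofReal_log (div_nonneg (by linarith) (by linarith)), hlog]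
  push_cast
  ring

theorem tan_eq_I_mul_ofReal_iff {z : ℂ} {t : ℝ} (h₀ : t ≠ 0) (ht : |t| < 1) :
    tan z = I * t ↔ ∃ n : ℤ, z = I / 2 * Real.log ((1 + t) / (1 - t)) + n * π := by
  obtain ⟨h₁, h₂⟩ := abs_lt.mp ht
  rw [tan_eq_iff_exists_int, arctan_I_mul_ofReal ht]
  · simpa using h₀
  · intro h
    simpa [h₂.ne] using congrArg im h
  · intro h
    simpa [h₁.ne'] using congrArg im h

end Complex

/-- Resonances of a line with a Dirichlet stub: explicit solution set. -/
theorem stub_resonances (l b : ℝ) (hl : 0 < l) (hb0 : b ≠ 0) (hb : |b| < Real.sqrt 2) :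
    {k : ℂ | Complex.tan (k * l) = -Complex.I * (b : ℂ) ^ 2 / 2}
      = {k : ℂ | ∃ n : ℤ, k = (n : ℂ) * Real.pi / l
          + (Complex.I / (2 * l)) * Real.log ((2 - b ^ 2) / (2 + b ^ 2))} := by
  have hb2 : b ^ 2 < 2 := by
    simpa [Real.sq_sqrt zero_le_two] using sq_lt_sq' (neg_lt_of_abs_lt hb) (lt_of_abs_lt hb)
  have ht : |-(b ^ 2 / 2)| < 1 := abs_lt.mpr ⟨by linarith, by linarith [sq_nonneg b]⟩
  have hc : -I * (b : ℂ) ^ 2 / 2 = I * (-(b ^ 2 / 2) : ℝ) := by push_cast; ring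
  have hlog : (1 + -(b ^ 2 / 2)) / (1 - -(b ^ 2 / 2)) = (2 - b ^ 2) / (2 + b ^ 2) := by
    rw [div_eq_div_iff (by nlinarith [sq_nonneg b]) (by positivity)]
    ring
  ext k
  simp only [Set.mem_ofPred_eq]
  rw [hc, Complex.tan_eq_I_mul_ofReal_iff (by simpa using hb0) ht, hlog]
  refine exists_congr fun n => ?_
  have hl0 : (l : ℂ) ≠ 0 := by exact_mod_cast hl.ne'
  constructor <;> intro h
  · field_simp
    linear_combination 2 * h
  · rw [h]
    field_simp
    ring
end
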